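/- Let κ ∈ ℂ, n ≥ 1 an integer, and let ψ : ℝ → ℂ be n-times differentiable such that for every 1 ≤ k ≤ n and every t ∈ ℝ, ∂^{k−1}ψ(t) ≠ 0 and ∂^{k−1}ψ(t) + κ lies in the slit plane (i.e., it is not a nonpositive real number). Define the alternative infinitesimal generators α_k(t) = Log(∂^{k−1}ψ(t) + κ) for 1 ≤ k ≤ n. Then for every t ∈ ℝ and every 1 ≤ k ≤ n, 1 − κ · exp(−α_k(t)) ≠ 0, and ψ(t)⁻¹ · ∂ⁿψ(t) = ∏_{k=1}^{n} (1 − κ · exp(−α_k(t)))⁻¹ · α_k'(t). -/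

import Mathlib

/-! Since `exp (-Log (z + κ)) = (z + κ)⁻¹`, the factor `1 - κ e^{-α_k}` equals
`∂^{k-1}ψ / (∂^{k-1}ψ + κ)`, while `α_k' = ∂^kψ / (∂^{k-1}ψ + κ)` by the chain rule for `Log` on the
slit plane. Each factor of the product is therefore `∂^kψ / ∂^{k-1}ψ`, and the product telescopes
to `∂ⁿψ / ψ`. -/

open Complex Finset

lemma Finset.mul_prod_Icc_div_pred_of_ne_zero {K : Type*} [CommGroupWithZero K] (f : ℕ → K)
    {n : ℕ} (hf : ∀ k < n, f k ≠ 0) :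
    f 0 * ∏ k ∈ Icc 1 n, f k / f (k - 1) = f n := by
  induction n with
  | zero => simp
  | succ n ih =>
    rw [prod_Icc_succ_top (by omega), ← mul_assoc, ih fun k hk ↦ hf k (by omega),
      Nat.add_sub_cancel, mul_div_cancel₀ _ (hf n (by omega))]

lemma Complex.one_sub_mul_exp_neg_log_add {z κ : ℂ} (h : z + κ ≠ 0) :
    1 - κ * exp (-log (z + κ)) = z / (z + κ) := by
  rw [exp_neg, exp_log h]
  field_simp
  ring

lemma Complex.inv_one_sub_mul_exp_neg_mul_deriv_log_add {f α : ℝ → ℂ} {κ : ℂ} {t : ℝ}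
    (hf : DifferentiableAt ℝ f t) (hft : f t ≠ 0) (hslit : f t + κ ∈ slitPlane)
    (hα : ∀ s, α s = log (f s + κ)) :
    (1 - κ * exp (-α t))⁻¹ * deriv α t = deriv f t / f t := by
  have hderiv : deriv α t = deriv f t / (f t + κ) := by
    rw [funext hα]
    exact (hf.hasDerivAt.add_const κ).clog_real hslit |>.deriv
  rw [hderiv, hα, one_sub_mul_exp_neg_log_add (slitPlane_ne_zero hslit)]
  field_simp [slitPlane_ne_zero hslit]

/-- Scalar form of Corollary 3: with alternative generators `α_k = Log(∂^{k-1}ψ + κ)`,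
`ψ⁻¹ ∂ⁿψ = ∏_{k=1}^n (1 − κ e^{−α_k})⁻¹ α_k'`. -/
theorem stmt_10 (κ : ℂ) (n : ℕ) (hn : 1 ≤ n)
    (ψ : ℝ → ℂ) (hψ : ∀ j : ℕ, j < n → Differentiable ℝ (iteratedDeriv j ψ))
    (hne : ∀ k : ℕ, 1 ≤ k → k ≤ n → ∀ t : ℝ, iteratedDeriv (k - 1) ψ t ≠ 0)
    (hslit : ∀ k : ℕ, 1 ≤ k → k ≤ n → ∀ t : ℝ,
      iteratedDeriv (k - 1) ψ t + κ ∈ Complex.slitPlane)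
    (α : ℕ → ℝ → ℂ)
    (hα : ∀ k : ℕ, 1 ≤ k → k ≤ n → ∀ t : ℝ,
      α k t = Complex.log (iteratedDeriv (k - 1) ψ t + κ)) :
    (∀ t : ℝ, ∀ k : ℕ, 1 ≤ k → k ≤ n → (1 - κ * Complex.exp (-α k t)) ≠ 0) ∧
      ∀ t : ℝ, (ψ t)⁻¹ * iteratedDeriv n ψ t
        = ∏ k ∈ Finset.Icc 1 n,
            (1 - κ * Complex.exp (-α k t))⁻¹ * deriv (α k) t := by
  refine ⟨fun t k hk1 hkn ↦ ?_, fun t ↦ ?_⟩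
  · rw [hα k hk1 hkn, one_sub_mul_exp_neg_log_add (slitPlane_ne_zero (hslit k hk1 hkn t))]
    exact div_ne_zero (hne k hk1 hkn t) (slitPlane_ne_zero (hslit k hk1 hkn t))
  have hfactor : ∀ k ∈ Icc 1 n, (1 - κ * exp (-α k t))⁻¹ * deriv (α k) t
      = iteratedDeriv k ψ t / iteratedDeriv (k - 1) ψ t := by
    intro k hk
    obtain ⟨hk1, hkn⟩ := mem_Icc.mp hk
    rw [inv_one_sub_mul_exp_neg_mul_deriv_log_add ((hψ (k - 1) (by omega)) t)
      (hne k hk1 hkn t) (hslit k hk1 hkn t) (hα k hk1 hkn), ← iteratedDeriv_succ,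
      Nat.sub_add_cancel hk1]
  have hψ0 : ψ t ≠ 0 := by simpa using hne 1 le_rfl hn t
  rw [prod_congr rfl hfactor, ← mul_prod_Icc_div_pred_of_ne_zero (iteratedDeriv · ψ t)
    fun k hk ↦ by simpa using hne (k + 1) (by omega) (by omega) t, iteratedDeriv_zero,
    inv_mul_cancel_left₀ hψ0]
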